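/- Let Γ = (C, X, H, I, η, E) be an admissible Galois structure such that every morphism in E is a monadic extension and I preserves pullbacks of split epimorphisms in E along morphisms in E. Then every covering is a normal extension. -/

import Mathlib

open CategoryTheory CategoryTheory.Limits

universe v u v' u'

namespace GaloisPaper

variable {C : Type u} [Category.{v} C]

/-- The class `E¹` of "double extensions" relative to a class `F` of morphisms:
a commutative square (i.e. a morphism `σ : a ⟶ b` of the arrow category) with all
four arrows in `F`, such that the comparison morphism to the pullback lies in `F`. -/
def InE1 (F : MorphismProperty C) : MorphismProperty (Arrow C) := fun a b σ =>
  F a.hom ∧ F b.hom ∧ F σ.left ∧ F σ.right ∧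
    ∃ (P : C) (p₁ : P ⟶ a.right) (p₂ : P ⟶ b.left) (l : a.left ⟶ P),
      IsPullback p₁ p₂ σ.right b.hom ∧ l ≫ p₁ = a.hom ∧ l ≫ p₂ = σ.left ∧ F l

/-- (E1): `F` contains all isomorphisms (between objects satisfying `O`). -/
def CondE1 (O : C → Prop) (F : MorphismProperty C) : Prop :=
  ∀ ⦃a b : C⦄ (σ : a ⟶ b), O a → O b → IsIso σ → F σ

/-- (E2): `F` is pullback-stable: pullbacks of morphisms of `F` along arbitrary
morphisms (between objects satisfying `O`) exist and lie in `F`. -/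
def CondE2 (O : C → Prop) (F : MorphismProperty C) : Prop :=
  ∀ ⦃a b : C⦄ (σ : a ⟶ b), F σ → ∀ ⦃c : C⦄ (g : c ⟶ b), O c →
    (∃ (d : C) (q₁ : d ⟶ a) (q₂ : d ⟶ c), O d ∧ IsPullback q₁ q₂ σ g ∧ F q₂) ∧
    (∀ ⦃d : C⦄ (q₁ : d ⟶ a) (q₂ : d ⟶ c), O d → IsPullback q₁ q₂ σ g → F q₂)

/-- (E3): `F` is closed under composition. -/
def CondE3 (F : MorphismProperty C) : Prop :=
  ∀ ⦃a b c : C⦄ (σ : a ⟶ b) (τ : b ⟶ c), F σ → F τ → F (σ ≫ τ)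

/-- (E4): if `σ ≫ τ ∈ F` then `τ ∈ F`. -/
def CondE4 (O : C → Prop) (F : MorphismProperty C) : Prop :=
  ∀ ⦃a b c : C⦄ (σ : a ⟶ b) (τ : b ⟶ c), O a → O b → O c → F (σ ≫ τ) → F τ

/-- (E5): every split epimorphism of `Ext(C)` (i.e. every morphism of the arrow
category between `F`-arrows admitting a section) lies in `F¹`. -/
def CondE5 (F : MorphismProperty C) : Prop :=
  ∀ ⦃a b : Arrow C⦄ (σ : a ⟶ b) (τ : b ⟶ a), τ ≫ σ = 𝟙 b → F a.hom → F b.hom → InE1 F σ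

/-- `(C ↓ B)`: the full subcategory of `Over B` on morphisms in `F`. -/
def EOver (F : MorphismProperty C) (B : C) :=
  ObjectProperty.FullSubcategory (fun f : Over B => F f.hom)

instance (F : MorphismProperty C) (B : C) : Category (EOver F B) :=
  ObjectProperty.FullSubcategory.category _

/-- `Σ_p`: composition with `p`, as a functor `(C ↓ A) ⥤ (C ↓ B)`. -/
def eMap (F : MorphismProperty C) {A B : C} (p : A ⟶ B)
    (hcomp : ∀ ⦃Z : C⦄ (f : Z ⟶ A), F f → F (f ≫ p)) : EOver F A ⥤ EOver F B :=
  ObjectProperty.lift _ (ObjectProperty.ι _ ⋙ Over.map p)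
    (fun f => hcomp f.obj.hom f.property)

/-- `p` is a monadic extension (effective `F`-descent morphism): `p ∈ F` and the
pullback functor `p* : (C ↓ B) ⥤ (C ↓ A)` (i.e. the right adjoint of `Σ_p`) is monadic. -/
def IsMonadicExt (F : MorphismProperty C) {A B : C} (p : A ⟶ B) : Prop :=
  F p ∧ ∃ (hcomp : ∀ ⦃Z : C⦄ (f : Z ⟶ A), F f → F (f ≫ p))
    (G : EOver F B ⥤ EOver F A) (_ : eMap F p hcomp ⊣ G),
    Nonempty (MonadicRightAdjoint G)

/-- `u : e ⟶ r` exhibits `r` as a reflection of `e` into the full subcategory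
determined by `P`. -/
def IsReflectionInto {D : Type u'} [Category.{v'} D] (P : D → Prop) {e r : D}
    (u : e ⟶ r) : Prop :=
  P r ∧ ∀ ⦃a : D⦄, P a → ∀ k : e ⟶ a, ∃! m : r ⟶ a, u ≫ m = k

/-- A Galois structure `(C, X, H, I, η, E)` as in Janelidze–Kelly: a full replete
reflective subcategory together with a class `E` satisfying (E1)–(E3) and (G). -/
structure GaloisStructure (C : Type u) [Category.{v} C] (X : Type u') [Category.{v'} X] where
  H : X ⥤ C
  I : C ⥤ X
  adj : I ⊣ H
  hFull : H.Full
  hFaithful : H.Faithful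
  E : MorphismProperty C
  hE1 : CondE1 (fun _ => True) E
  hE2 : CondE2 (fun _ => True) E
  hE3 : CondE3 E
  hG : ∀ ⦃A B : C⦄ (f : A ⟶ B), E f → E (H.map (I.map f))

namespace GaloisStructure

variable {X : Type u'} [Category.{v'} X] (Γ : GaloisStructure C X)

/-- The component `η_A : A ⟶ HI(A)` of the reflection unit. -/
def unitApp (A : C) : A ⟶ Γ.H.obj (Γ.I.obj A) := Γ.adj.unit.app A

/-- A trivial covering: `f ∈ E` whose `η`-naturality square is a pullback. -/
def TrivCov {A B : C} (f : A ⟶ B) : Prop :=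
  Γ.E f ∧ IsPullback (Γ.unitApp A) f (Γ.H.map (Γ.I.map f)) (Γ.unitApp B)

/-- `f` is split by `p`: the pullback `p*(f)` of `f` along `p` is a trivial covering. -/
def IsSplitBy {A B E' : C} (f : A ⟶ B) (p : E' ⟶ B) : Prop :=
  ∀ ⦃P : C⦄ (p₁ : P ⟶ A) (p₂ : P ⟶ E'), IsPullback p₁ p₂ f p → Γ.TrivCov p₂

/-- A covering (central extension): a morphism of `E` split by some monadic extension. -/
def Covering {A B : C} (f : A ⟶ B) : Prop :=
  Γ.E f ∧ ∃ (E' : C) (p : E' ⟶ B), IsMonadicExt Γ.E p ∧ Γ.IsSplitBy f p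

/-- A normal extension: a monadic extension split by itself. -/
def NormalExt {A B : C} (p : A ⟶ B) : Prop :=
  IsMonadicExt Γ.E p ∧ Γ.IsSplitBy p p

/-- (M): every morphism of `E` is a monadic extension. -/
def CondM : Prop := ∀ ⦃A B : C⦄ (p : A ⟶ B), Γ.E p → IsMonadicExt Γ.E p

/-- Admissibility of the Galois structure: the right adjoints
`H^B : (X ↓ I(B)) ⥤ (C ↓ B)` are fully faithful.  Equivalently (and this is how we
state it), for every `φ : x ⟶ I(B)` with `H(φ) ∈ E` and every pullback of `H(φ)`
along `η_B`, the corresponding component of the counit of `I^B ⊣ H^B`, i.e. the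
adjoint transpose `I(A) ⟶ x` of `t : A ⟶ H(x)`, is an isomorphism. -/
def Admissible : Prop :=
  ∀ ⦃B : C⦄ ⦃x : X⦄ (φ : x ⟶ Γ.I.obj B), Γ.E (Γ.H.map φ) →
    ∀ ⦃A : C⦄ (t : A ⟶ Γ.H.obj x) (f : A ⟶ B),
      IsPullback t f (Γ.H.map φ) (Γ.unitApp B) →
      IsIso ((Γ.adj.homEquiv A x).symm t)

/-- The `η`-naturality square at `f`, as a morphism of the arrow category. -/
def unitSq {A B : C} (f : A ⟶ B) : Arrow.mk f ⟶ Arrow.mk (Γ.H.map (Γ.I.map f)) :=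
  Arrow.homMk (u := Γ.unitApp A) (v := Γ.unitApp B)
    (by simp [unitApp])

/-- (B): `X` is a strongly `E`-Birkhoff subcategory of `C`: every `η`-naturality
square at a morphism of `E` lies in `E¹`. -/
def StronglyBirkhoff : Prop :=
  ∀ ⦃A B : C⦄ (f : A ⟶ B), Γ.E f → InE1 Γ.E (Γ.unitSq f)

/-- `I` preserves pullbacks of morphisms of `E` along split epimorphisms of `E`. -/
def PreservesSplitPullbacks : Prop :=
  ∀ ⦃D' A B C' : C⦄ (t : D' ⟶ A) (h : D' ⟶ C') (f : A ⟶ B) (g : C' ⟶ B),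
    IsPullback t h f g → Γ.E f → Γ.E g → IsSplitEpi g →
    IsPullback (Γ.I.map t) (Γ.I.map h) (Γ.I.map f) (Γ.I.map g)

end GaloisStructure

/-- The class of regular epimorphisms. -/
def regEpi (C : Type u) [Category.{v} C] : MorphismProperty C :=
  fun _ _ f => Nonempty (RegularEpi f)

/-- A pair of parallel morphisms is jointly monic. -/
def JointlyMono {R A : C} (d₀ d₁ : R ⟶ A) : Prop :=
  ∀ ⦃T : C⦄ (x y : T ⟶ R), x ≫ d₀ = y ≫ d₀ → x ≫ d₁ = y ≫ d₁ → x = y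

/-- An internal reflexive relation (given by its jointly monic pair of projections). -/
def IsReflexiveRel {R A : C} (d₀ d₁ : R ⟶ A) : Prop :=
  JointlyMono d₀ d₁ ∧ ∃ r : A ⟶ R, r ≫ d₀ = 𝟙 A ∧ r ≫ d₁ = 𝟙 A

/-- An internal equivalence relation. -/
def IsEquivRel {R A : C} (d₀ d₁ : R ⟶ A) : Prop :=
  IsReflexiveRel d₀ d₁ ∧ (∃ s : R ⟶ R, s ≫ d₀ = d₁ ∧ s ≫ d₁ = d₀) ∧
    ∀ ⦃T : C⦄ (x y : T ⟶ R), x ≫ d₁ = y ≫ d₀ →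
      ∃ t : T ⟶ R, t ≫ d₀ = x ≫ d₀ ∧ t ≫ d₁ = y ≫ d₁

/-- A Mal'tsev category: every internal reflexive relation is an equivalence relation. -/
def IsMaltsevCat (C : Type u) [Category.{v} C] : Prop :=
  ∀ ⦃A R : C⦄ (d₀ d₁ : R ⟶ A), IsReflexiveRel d₀ d₁ → IsEquivRel d₀ d₁

/-- A regular category: finite limits (assumed separately), regular epi–mono
factorisations, and pullback-stability of regular epimorphisms. -/
structure IsRegularCategory (C : Type u) [Category.{v} C] : Prop where
  factor : ∀ ⦃A B : C⦄ (f : A ⟶ B), ∃ (I' : C) (e : A ⟶ I') (m : I' ⟶ B),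
    f = e ≫ m ∧ Nonempty (RegularEpi e) ∧ Mono m
  stable : ∀ ⦃P' X' Y' Z' : C⦄ (p₁ : P' ⟶ X') (p₂ : P' ⟶ Y') (f : X' ⟶ Z') (g : Y' ⟶ Z'),
    IsPullback p₁ p₂ f g → Nonempty (RegularEpi f) → Nonempty (RegularEpi p₂)

/-- A Barr-exact category: regular, and every internal equivalence relation is
effective (i.e. a kernel pair). -/
def IsBarrExact (C : Type u) [Category.{v} C] : Prop :=
  IsRegularCategory C ∧ ∀ ⦃A R : C⦄ (d₀ d₁ : R ⟶ A), IsEquivRel d₀ d₁ →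
    ∃ (Q : C) (q : A ⟶ Q), IsPullback d₀ d₁ q q

/-- A Birkhoff subcategory: a full reflective subcategory closed under subobjects
and regular quotient objects. -/
structure IsBirkhoff {X : Type u'} [Category.{v'} X] (H : X ⥤ C) (I : C ⥤ X)
    (adj : I ⊣ H) : Prop where
  full : H.Full
  faithful : H.Faithful
  closedSub : ∀ (x : X) (A : C) (m : A ⟶ H.obj x), Mono m → ∃ y : X, Nonempty (A ≅ H.obj y)
  closedQuot : ∀ (x : X) (A : C) (e : H.obj x ⟶ A), Nonempty (RegularEpi e) →
    ∃ y : X, Nonempty (A ≅ H.obj y)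

/-- The category `Ext(C)` of `F`-morphisms. -/
def ExtCat (F : MorphismProperty C) := ObjectProperty.FullSubcategory (fun a : Arrow C => F a.hom)

instance (F : MorphismProperty C) : Category (ExtCat F) := ObjectProperty.FullSubcategory.category _

/-- The restriction of `F¹` to the category `Ext(C)`. -/
def ExtE1 (F : MorphismProperty C) : MorphismProperty (ExtCat F) :=
  fun _ _ σ => InE1 F ((ObjectProperty.ι _).map σ)

/-!
Let `f` be split by the monadic extension `p`, let `q₂ : Q ⟶ E'` be the pullback of `f` along `p`
(a trivial covering) and let `p₂` be the second projection of the kernel pair of `f`. Pulling `p₂`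
back along `q₁ : Q ⟶ A` gives a projection of the kernel pair of `q₂`, which is a trivial covering
because admissibility makes trivial coverings stable under pullback. As `p₂` is split by the
diagonal, `I` preserves this pullback square, so the `η`-square of `p₂` becomes a pullback once
pulled back along `q₁`. Since `q₁ ∈ E` is a monadic extension, `q₁*` reflects isomorphisms, and
the `η`-square of `p₂` is itself a pullback.
-/

section Descent

variable {D : Type u'} [Category.{v'} D]

instance (G : D ⥤ C) [MonadicRightAdjoint G] : G.ReflectsIsomorphisms :=
  reflectsIsomorphisms_of_iso (Monad.comparisonForget (monadicAdjunction G))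

lemma isIso_map_of_bijective_comp {L : C ⥤ D} {G : D ⥤ C} (adj : L ⊣ G) {a b : D} (f : a ⟶ b)
    (hf : ∀ T, Function.Bijective fun g : L.obj T ⟶ a => g ≫ f) : IsIso (G.map f) := by
  refine isIso_of_yoneda_map_bijective _ fun T => ?_
  have : (fun g : T ⟶ G.obj a => g ≫ G.map f) =
      adj.homEquiv T b ∘ (fun g => g ≫ f) ∘ (adj.homEquiv T a).symm := by
    funext g
    simp [← Adjunction.homEquiv_naturality_right_symm]
  rw [this]
  exact (adj.homEquiv T b).bijective.comp ((hf T).comp (adj.homEquiv T a).symm.bijective)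

lemma eq_of_isPullback_comp {A Q P V W T : C} {p : P ⟶ A} {q : Q ⟶ A} {g : V ⟶ A} {c : P ⟶ V}
    {u : W ⟶ P} {w : W ⟶ Q} (hu : IsPullback u w p q) (huc : IsPullback (u ≫ c) w g q)
    {t : T ⟶ Q} {m₁ m₂ : T ⟶ P} (h₁ : m₁ ≫ p = t ≫ q) (h₂ : m₂ ≫ p = t ≫ q)
    (h : m₁ ≫ c = m₂ ≫ c) : m₁ = m₂ := by
  rw [← hu.lift_fst m₁ t h₁, ← hu.lift_fst m₂ t h₂]
  congr 1
  apply huc.hom_ext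
  · simpa using h
  · simp

lemma exists_comp_eq_of_isPullback_comp {A Q P V W T : C} {q : Q ⟶ A} {g : V ⟶ A} {c : P ⟶ V}
    {u : W ⟶ P} {w : W ⟶ Q} (huc : IsPullback (u ≫ c) w g q)
    {t : T ⟶ Q} {m : T ⟶ V} (h : m ≫ g = t ≫ q) : ∃ m' : T ⟶ P, m' ≫ c = m :=
  ⟨huc.lift m t h ≫ u, by simp⟩

/-- The squares `hu` and `huc` say that `q*(c)` is invertible; `q*` is monadic, so it reflects
this to `c`. -/
lemma isIso_of_isPullback_of_isMonadicExt {F : MorphismProperty C} {A Q : C} {q : Q ⟶ A}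
    (hq : IsMonadicExt F q) {P V W : C} {p : P ⟶ A} {g : V ⟶ A} (hp : F p) (hg : F g)
    {c : P ⟶ V} (hc : c ≫ g = p) {u : W ⟶ P} {w : W ⟶ Q}
    (hu : IsPullback u w p q) (huc : IsPullback (u ≫ c) w g q) : IsIso c := by
  obtain ⟨-, hcomp, G, adj, ⟨hG⟩⟩ := hq
  let c' : (⟨Over.mk p, hp⟩ : EOver F A) ⟶ ⟨Over.mk g, hg⟩ :=
    ObjectProperty.homMk (Over.homMk c hc)
  suffices IsIso c' from inferInstanceAs (IsIso ((ObjectProperty.ι _ ⋙ Over.forget A).map c'))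
  have : IsIso (G.map c') := isIso_map_of_bijective_comp adj c' fun T => by
    refine ⟨fun m₁ m₂ h => ?_, fun m => ?_⟩
    · apply ObjectProperty.hom_ext
      apply Over.OverMorphism.ext
      exact eq_of_isPullback_comp hu huc (Over.w m₁.hom) (Over.w m₂.hom)
        (congrArg (fun m => m.hom.left) h)
    · obtain ⟨m', hm'⟩ := exists_comp_eq_of_isPullback_comp huc (Over.w m.hom)
      refine ⟨ObjectProperty.homMk (Over.homMk m' ?_), ?_⟩
      · simpa [← hc, reassoc_of% hm'] using Over.w m.hom
      · apply ObjectProperty.hom_ext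
        apply Over.OverMorphism.ext
        exact hm'
  exact isIso_of_reflects_iso (C := EOver F A) c' G

end Descent

lemma exists_isKernelPair_of_isPullback {A B E Q W P : C} {f : A ⟶ B} {p : E ⟶ B}
    {p₁ p₂ : P ⟶ A} {q₁ : Q ⟶ A} {q₂ : Q ⟶ E} {w₁ : W ⟶ P} {w₂ : W ⟶ Q}
    (hP : IsKernelPair f p₁ p₂) (hQ : IsPullback q₁ q₂ f p) (hW : IsPullback w₁ w₂ p₂ q₁) :
    ∃ u : W ⟶ Q, IsKernelPair q₂ u w₂ := by
  have hcone : (w₁ ≫ p₁) ≫ f = (w₂ ≫ q₂) ≫ p := by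
    simp only [Category.assoc, hP.w, hW.w_assoc, hQ.w]
  refine ⟨hQ.lift _ _ hcone, IsPullback.of_right ?_ (hQ.lift_snd _ _ _) hQ⟩
  rw [hQ.lift_fst, ← hQ.w]
  exact hW.paste_horiz hP

namespace GaloisStructure

variable {X : Type u'} [Category.{v'} X] (Γ : GaloisStructure C X)

lemma E_of_isPullback {A B P Y : C} {f : A ⟶ B} {g : Y ⟶ B} {p₁ : P ⟶ A} {p₂ : P ⟶ Y}
    (hf : Γ.E f) (h : IsPullback p₁ p₂ f g) : Γ.E p₂ :=
  (Γ.hE2 f hf g trivial).2 p₁ p₂ trivial h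

lemma exists_isPullback {A B : C} {f : A ⟶ B} (hf : Γ.E f) {Y : C} (g : Y ⟶ B) :
    ∃ (P : C) (p₁ : P ⟶ A) (p₂ : P ⟶ Y), IsPullback p₁ p₂ f g ∧ Γ.E p₂ := by
  obtain ⟨⟨P, p₁, p₂, -, h, hp₂⟩, -⟩ := Γ.hE2 f hf g trivial
  exact ⟨P, p₁, p₂, h, hp₂⟩

lemma unitApp_naturality {A B : C} (f : A ⟶ B) :
    Γ.unitApp A ≫ Γ.H.map (Γ.I.map f) = f ≫ Γ.unitApp B :=
  Γ.adj.unit_naturality f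

lemma unitApp_comp_map_homEquiv_symm {A : C} {x : X} (t : A ⟶ Γ.H.obj x) :
    Γ.unitApp A ≫ Γ.H.map ((Γ.adj.homEquiv A x).symm t) = t := by
  simp [unitApp, ← Adjunction.homEquiv_unit]

lemma hom_ext_unitApp {A : C} {x : X} {g h : Γ.H.obj (Γ.I.obj A) ⟶ Γ.H.obj x}
    (e : Γ.unitApp A ≫ g = Γ.unitApp A ≫ h) : g = h := by
  have := Γ.hFull
  obtain ⟨g, rfl⟩ := Γ.H.map_surjective g
  obtain ⟨h, rfl⟩ := Γ.H.map_surjective h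
  refine congrArg Γ.H.map ((Γ.adj.homEquiv _ _).injective ?_)
  rw [Adjunction.homEquiv_unit, Adjunction.homEquiv_unit]
  exact e

lemma trivCov_of_isPullback_map_unitApp (hadm : Γ.Admissible) {A B : C} {x : X} {φ : x ⟶ Γ.I.obj B}
    (hφ : Γ.E (Γ.H.map φ)) {t : A ⟶ Γ.H.obj x} {f : A ⟶ B}
    (h : IsPullback t f (Γ.H.map φ) (Γ.unitApp B)) (hf : Γ.E f) : Γ.TrivCov f := by
  set ε := (Γ.adj.homEquiv A x).symm t
  have : IsIso ε := hadm φ hφ t f h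
  have ht : Γ.unitApp A ≫ Γ.H.map ε = t := Γ.unitApp_comp_map_homEquiv_symm t
  have hεφ : Γ.H.map ε ≫ Γ.H.map φ = Γ.H.map (Γ.I.map f) := Γ.hom_ext_unitApp <| by
    rw [← Category.assoc, ht, h.w, Γ.unitApp_naturality]
  refine ⟨hf, h.of_iso (Iso.refl _) (Γ.H.mapIso (asIso ε)).symm (Iso.refl _) (Iso.refl _)
    ?_ (by simp) ?_ (by simp)⟩
  · simp [← ht]
  · simp [← hεφ]

lemma isIso_unitApp_of_isPullback {x₁ x₂ x₃ : X} {a : x₁ ⟶ x₃} {b : x₂ ⟶ x₃} {V : C}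
    {v₁ : V ⟶ Γ.H.obj x₁} {v₂ : V ⟶ Γ.H.obj x₂}
    (h : IsPullback v₁ v₂ (Γ.H.map a) (Γ.H.map b)) : IsIso (Γ.unitApp V) := by
  have hv₁ := Γ.unitApp_comp_map_homEquiv_symm v₁
  have hv₂ := Γ.unitApp_comp_map_homEquiv_symm v₂
  set r := h.lift (Γ.H.map ((Γ.adj.homEquiv V x₁).symm v₁))
    (Γ.H.map ((Γ.adj.homEquiv V x₂).symm v₂)) (Γ.hom_ext_unitApp <| by
      simp only [← Category.assoc, hv₁, hv₂, h.w])
  have hr : Γ.unitApp V ≫ r = 𝟙 V := h.hom_ext (by simp [r, hv₁]) (by simp [r, hv₂])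
  exact ⟨r, hr, Γ.hom_ext_unitApp (by rw [← Category.assoc, hr]; simp)⟩

variable {Γ} in
lemma TrivCov.of_isPullback (hadm : Γ.Admissible) {A B Y P : C} {g : A ⟶ B}
    (hg : Γ.TrivCov g) {z : Y ⟶ B} {u : P ⟶ A} {g' : P ⟶ Y}
    (h : IsPullback u g' g z) (hg' : Γ.E g') : Γ.TrivCov g' := by
  obtain ⟨V, v₁, v₂, hV, hv₂⟩ := Γ.exists_isPullback (Γ.hG g hg.1) (Γ.H.map (Γ.I.map z))
  have : IsIso (Γ.unitApp V) := Γ.isIso_unitApp_of_isPullback hV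
  have hout : IsPullback (u ≫ Γ.unitApp A) g' (Γ.H.map (Γ.I.map g))
      (Γ.unitApp Y ≫ Γ.H.map (Γ.I.map z)) := by
    simpa [Γ.unitApp_naturality] using h.paste_horiz hg.2
  set t := hV.lift _ _ (hout.w.trans (Category.assoc _ _ _).symm)
  have ht : IsPullback t g' v₂ (Γ.unitApp Y) :=
    IsPullback.of_right (by rwa [hV.lift_fst]) (hV.lift_snd _ _ _) hV
  set φ := (Γ.adj.homEquiv V (Γ.I.obj Y)).symm v₂
  have hφ : Γ.unitApp V ≫ Γ.H.map φ = v₂ := Γ.unitApp_comp_map_homEquiv_symm v₂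
  have hEφ : Γ.E (Γ.H.map φ) := by
    rw [← IsIso.inv_hom_id_assoc (Γ.unitApp V) (Γ.H.map φ), hφ]
    exact Γ.hE3 _ _ (Γ.hE1 _ trivial trivial inferInstance) hv₂
  refine Γ.trivCov_of_isPullback_map_unitApp hadm hEφ (t := t ≫ Γ.unitApp V) ?_ hg'
  exact ht.of_iso (Iso.refl _) (asIso (Γ.unitApp V)) (Iso.refl _) (Iso.refl _)
    (by simp) (by simp) (by simpa using hφ.symm) (by simp)

lemma trivCov_of_isPullback_of_isMonadicExt {A P Q W : C} {q : Q ⟶ A} (hq : IsMonadicExt Γ.E q)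
    {g : P ⟶ A} (hg : Γ.E g) {w₁ : W ⟶ P} {w₂ : W ⟶ Q} (hW : IsPullback w₁ w₂ g q)
    (h : IsPullback (w₁ ≫ Γ.unitApp P) w₂ (Γ.H.map (Γ.I.map g)) (q ≫ Γ.unitApp A)) :
    Γ.TrivCov g := by
  obtain ⟨V, t, g', hV, hg'⟩ := Γ.exists_isPullback (Γ.hG g hg) (Γ.unitApp A)
  set c := hV.lift (Γ.unitApp P) g (Γ.unitApp_naturality g)
  have hct : c ≫ t = Γ.unitApp P := hV.lift_fst _ _ _
  have hcg : c ≫ g' = g := hV.lift_snd _ _ _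
  have : IsIso c := isIso_of_isPullback_of_isMonadicExt hq hg hg' hcg hW <|
    IsPullback.of_right (by simpa [hct] using h) (by simp [hcg, hW.w]) hV
  exact ⟨hg, hV.of_iso (asIso c).symm (Iso.refl _) (Iso.refl _) (Iso.refl _)
    (by simp [← hct]) (by simp [← hcg]) (by simp) (by simp)⟩

end GaloisStructure

/-- If `Γ` is admissible, every morphism of `E` is a monadic
extension, and `I` preserves pullbacks of split epimorphisms in `E` along
morphisms of `E`, then every covering is a normal extension. -/
theorem statement_5 {C : Type u} [Category.{v} C] {X : Type u'} [Category.{v'} X]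
    (Γ : GaloisStructure C X) (hadm : Γ.Admissible) (hM : Γ.CondM)
    (hpres : Γ.PreservesSplitPullbacks)
    {A B : C} (f : A ⟶ B) (hf : Γ.Covering f) :
    Γ.NormalExt f := by
  obtain ⟨hf, E', p, hp, hsplit⟩ := hf
  refine ⟨hM f hf, fun P p₁ p₂ hP => ?_⟩
  have hp₂ : Γ.E p₂ := Γ.E_of_isPullback hf hP
  obtain ⟨Q, q₁, q₂, hQ, -⟩ := Γ.exists_isPullback hf p
  have hq₁ : Γ.E q₁ := Γ.E_of_isPullback hp.1 hQ.flip
  obtain ⟨W, w₁, w₂, hW, hw₂⟩ := Γ.exists_isPullback hp₂ q₁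
  obtain ⟨u, hu⟩ := exists_isKernelPair_of_isPullback hP hQ hW
  have hw₂triv : Γ.TrivCov w₂ := (hsplit q₁ q₂ hQ).of_isPullback hadm hu hw₂
  have hp₂split : IsSplitEpi p₂ := IsSplitEpi.mk' ⟨hP.lift (𝟙 A) (𝟙 A) rfl, hP.lift_snd _ _ _⟩
  have := Γ.adj.rightAdjoint_preservesLimits.{0, 0}
  have hIW := (hpres w₂ w₁ q₁ p₂ hW.flip hq₁ hp₂ hp₂split).flip.map Γ.H
  refine Γ.trivCov_of_isPullback_of_isMonadicExt (hM q₁ hq₁) hp₂ hW ?_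
  simpa [Γ.unitApp_naturality] using hw₂triv.2.paste_horiz hIW

end GaloisPaper
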